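/- Let ω₁, ω₂, τ ∈ ℝ with ω₁τ, ω₂τ ∈ (0, π) and ω₁ ≠ ω₂ (mod 2π/τ, i.e., cos(ω₁τ) ≠ cos(ω₂τ)). Then for p ≥ 4 the p×4 matrix V with rows (cos(jω₁τ), sin(jω₁τ), cos(jω₂τ), sin(jω₂τ)), j = 0, …, p-1, has rank 4. -/

import Mathlib

open Real Matrix

/-!
The first four rows already have full rank. Writing `z = e^{ix}`, `w = e^{iy}`, their determinant
is `sin x * sin y * |z - w|² * |z - conj w|²`, which up to a nonzero constant is the Vandermonde
determinant of the four nodes `z, conj z, w, conj w`; these are pairwise distinct exactly when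
`sin x ≠ 0`, `sin y ≠ 0` and `cos x ≠ cos y`.
-/

theorem Matrix.rank_eq_card_width_of_det_submatrix_ne_zero {m n R : Type*} [Fintype n]
    [DecidableEq n] [CommRing R] [IsDomain R] (A : Matrix m n R) (r : n → m)
    (h : (A.submatrix r id).det ≠ 0) : A.rank = Fintype.card n :=
  le_antisymm A.rank_le_card_width
    ((rank_of_det_ne_zero h).symm.trans_le (A.rank_submatrix_le r id))

noncomputable def harmonicEmbedding (p : ℕ) (x y : ℝ) : Matrix (Fin p) (Fin 4) ℝ :=
  of fun j => ![cos (j * x), sin (j * x), cos (j * y), sin (j * y)]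

theorem det_harmonicEmbedding_four (x y : ℝ) :
    (harmonicEmbedding 4 x y).det = sin x * sin y * ((cos x - cos y) ^ 2 + (sin x - sin y) ^ 2) *
      ((cos x - cos y) ^ 2 + (sin x + sin y) ^ 2) := by
  have cos_three (t : ℝ) : cos (3 * t) = cos t * cos (2 * t) - sin t * sin (2 * t) := by
    rw [← cos_add]; ring_nf
  have sin_three (t : ℝ) : sin (3 * t) = sin t * cos (2 * t) + cos t * sin (2 * t) := by
    rw [← sin_add]; ring_nf
  simp [det_succ_row_zero, Fin.sum_univ_succ, harmonicEmbedding, Fin.succAbove, cos_three,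
    sin_three, cos_two_mul', sin_two_mul]
  ring

theorem det_harmonicEmbedding_four_ne_zero {x y : ℝ} (hx : sin x ≠ 0) (hy : sin y ≠ 0)
    (hxy : cos x ≠ cos y) : (harmonicEmbedding 4 x y).det ≠ 0 := by
  have hc : 0 < (cos x - cos y) ^ 2 := by positivity [sub_ne_zero.mpr hxy]
  rw [det_harmonicEmbedding_four]
  positivity

theorem rank_harmonicEmbedding {p : ℕ} (hp : 4 ≤ p) {x y : ℝ} (hx : sin x ≠ 0)
    (hy : sin y ≠ 0) (hxy : cos x ≠ cos y) : (harmonicEmbedding p x y).rank = 4 := by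
  have hdet : ((harmonicEmbedding p x y).submatrix (Fin.castLE hp) id).det ≠ 0 :=
    det_harmonicEmbedding_four_ne_zero hx hy hxy
  exact (rank_eq_card_width_of_det_submatrix_ne_zero _ _ hdet).trans (Fintype.card_fin 4)

theorem stmt_9 (ω₁ ω₂ τ : ℝ) (p : ℕ) (hp : 4 ≤ p)
    (h₁ : ω₁ * τ ∈ Set.Ioo 0 π) (h₂ : ω₂ * τ ∈ Set.Ioo 0 π)
    (hcc : Real.cos (ω₁ * τ) ≠ Real.cos (ω₂ * τ))
    (V : Matrix (Fin p) (Fin 4) ℝ)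
    (hV : ∀ j : Fin p, ∀ i : Fin 4,
      V j i = ![Real.cos ((j : ℕ) * ω₁ * τ), Real.sin ((j : ℕ) * ω₁ * τ),
                Real.cos ((j : ℕ) * ω₂ * τ), Real.sin ((j : ℕ) * ω₂ * τ)] i) :
    V.rank = 4 := by
  have hV_eq : V = harmonicEmbedding p (ω₁ * τ) (ω₂ * τ) := by
    ext j i
    simp only [hV, harmonicEmbedding, of_apply, mul_assoc]
  rw [hV_eq]
  exact rank_harmonicEmbedding hp (sin_pos_of_pos_of_lt_pi h₁.1 h₁.2).ne'
    (sin_pos_of_pos_of_lt_pi h₂.1 h₂.2).ne' hcc
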